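/- For 0 < x < 1, the function x ↦ J₀(x)·(K(x) − E(x)) − x·J₁(x)·E(x) is differentiable with derivative (x³/(1 − x²))·J₀(x)·E(x); equivalently, ∫ (x³/(1−x²)) J₀(x) E(x) dx = J₀(x)(K(x) − E(x)) − x·J₁(x)·E(x). -/

import Mathlib

/-!
Differentiating under the integral sign gives `J₀' = -J₁`, `x J₁' = x J₀ - J₁`,
`k E' = E - K` and `k K' = E / (1 - k²) - K`. For `J₀'` the term `∫₀^π cos θ cos (x sin θ) dθ`
vanishes by the symmetry `θ ↦ π - θ`; for `J₁'` and `K'` the extra terms are integrals of exact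
derivatives, of `sin (θ - x sin θ)` and of `k² sin θ cos θ (1 - k² sin² θ)^(-1/2)`, both vanishing
at the endpoints. Substituting these four derivatives, everything cancels except
`x³ / (1 - x²) · J₀ E`.
-/

open Real

/-- The complete elliptic integral of the first kind,
`K(k) = ∫₀^{π/2} (1 − k² sin²θ)^{−1/2} dθ`. -/
noncomputable def ellipticK (k : ℝ) : ℝ :=
  ∫ θ in (0:ℝ)..(π / 2), (1 - k ^ 2 * Real.sin θ ^ 2) ^ (-(1:ℝ) / 2)

/-- The complete elliptic integral of the second kind,
`E(k) = ∫₀^{π/2} (1 − k² sin²θ)^{1/2} dθ`. -/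
noncomputable def ellipticE (k : ℝ) : ℝ :=
  ∫ θ in (0:ℝ)..(π / 2), (1 - k ^ 2 * Real.sin θ ^ 2) ^ ((1:ℝ) / 2)

/-- The Bessel function of the first kind of order 0, by Bessel's integral
`J₀(x) = (1/π)∫₀^π cos(x sin θ) dθ`. -/
noncomputable def besselJ0 (x : ℝ) : ℝ :=
  (1 / π) * ∫ θ in (0:ℝ)..π, Real.cos (x * Real.sin θ)

/-- The Bessel function of the first kind of order 1, by Bessel's integral
`J₁(x) = (1/π)∫₀^π cos(θ − x sin θ) dθ`. -/
noncomputable def besselJ1 (x : ℝ) : ℝ :=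
  (1 / π) * ∫ θ in (0:ℝ)..π, Real.cos (θ - x * Real.sin θ)

open Set Function intervalIntegral MeasureTheory
open scoped Interval

theorem hasDerivAt_intervalIntegral_of_continuousOn {F F' : ℝ → ℝ → ℝ} {U : Set ℝ}
    {a b x₀ : ℝ} (hU : IsOpen U) (hx₀ : x₀ ∈ U) (hF : ∀ x ∈ U, ContinuousOn (F x) (uIcc a b))
    (hF' : ContinuousOn (uncurry F') (U ×ˢ uIcc a b))
    (hderiv : ∀ x ∈ U, ∀ t ∈ uIcc a b, HasDerivAt (F · t) (F' x t) x) :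
    HasDerivAt (fun x => ∫ t in a..b, F x t) (∫ t in a..b, F' x₀ t) x₀ := by
  obtain ⟨δ, hδ, hball⟩ := Metric.isOpen_iff.1 hU x₀ hx₀
  have hsub : Metric.closedBall x₀ (δ / 2) ⊆ U :=
    (Metric.closedBall_subset_ball (half_lt_self hδ)).trans hball
  obtain ⟨C, hC⟩ := ((isCompact_closedBall x₀ (δ / 2)).prod
    isCompact_uIcc).exists_bound_of_continuousOn (hF'.mono (prod_mono hsub subset_rfl))
  have hmeas : ∀ G : ℝ → ℝ, ContinuousOn G (uIcc a b) →
      AEStronglyMeasurable G (volume.restrict (Ι a b)) := fun G hG =>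
    (hG.mono uIoc_subset_uIcc).aestronglyMeasurable measurableSet_uIoc
  refine (hasDerivAt_integral_of_dominated_loc_of_deriv_le (bound := fun _ => C)
    (Metric.closedBall_mem_nhds x₀ (half_pos hδ)) ?_ (hF x₀ hx₀).intervalIntegrable ?_ ?_
    intervalIntegrable_const ?_).2
  · filter_upwards [hU.mem_nhds hx₀] with x hx
    exact hmeas _ (hF x hx)
  · exact hmeas _ (hF'.comp (f := fun t => (x₀, t)) (Continuous.continuousOn (by fun_prop))
      fun t ht => ⟨hx₀, ht⟩)
  · exact ae_of_all _ fun t ht x hx => hC (x, t) ⟨hx, uIoc_subset_uIcc ht⟩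
  · exact ae_of_all _ fun t ht x hx => hderiv x (hsub hx) t (uIoc_subset_uIcc ht)

theorem hasDerivAt_intervalIntegral_of_continuous {F F' : ℝ → ℝ → ℝ} {a b : ℝ}
    (hF : ∀ x, Continuous (F x)) (hF' : Continuous (uncurry F'))
    (hderiv : ∀ x t, HasDerivAt (F · t) (F' x t) x) (x₀ : ℝ) :
    HasDerivAt (fun x => ∫ t in a..b, F x t) (∫ t in a..b, F' x₀ t) x₀ :=
  hasDerivAt_intervalIntegral_of_continuousOn isOpen_univ (mem_univ x₀)
    (fun x _ => (hF x).continuousOn) hF'.continuousOn fun x _ t _ => hderiv x t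

theorem integral_cos_mul_comp_sin_eq_zero (f : ℝ → ℝ) :
    ∫ θ in (0:ℝ)..π, cos θ * f (sin θ) = 0 := by
  have h := integral_comp_sub_left (fun θ => cos θ * f (sin θ)) (a := 0) (b := π) π
  simp only [cos_pi_sub, sin_pi_sub, neg_mul, intervalIntegral.integral_neg, sub_self, sub_zero] at h
  linarith

theorem hasDerivAt_besselJ0 (x : ℝ) : HasDerivAt besselJ0 (-besselJ1 x) x := by
  have hderiv := hasDerivAt_intervalIntegral_of_continuous (a := 0) (b := π)
    (F := fun x θ => cos (x * sin θ)) (F' := fun x θ => -(sin θ * sin (x * sin θ)))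
    (fun _ => by fun_prop) (by fun_prop)
    (fun y θ => by simpa [mul_comm] using (hasDerivAt_mul_const (sin θ)).cos (x := y)) x
  refine HasDerivAt.congr_deriv (f := besselJ0) (hderiv.const_mul (1 / π)) ?_
  have hsplit : ∀ θ, cos (θ - x * sin θ) = cos θ * cos (x * sin θ) + sin θ * sin (x * sin θ) :=
    fun θ => cos_sub _ _
  simp only [besselJ1]
  rw [intervalIntegral.integral_congr fun θ _ => hsplit θ,
    intervalIntegral.integral_add (by apply Continuous.intervalIntegrable; fun_prop)
      (by apply Continuous.intervalIntegrable; fun_prop),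
    integral_cos_mul_comp_sin_eq_zero fun s => cos (x * s), intervalIntegral.integral_neg]
  ring

theorem hasDerivAt_besselJ1 {x : ℝ} (hx : x ≠ 0) :
    HasDerivAt besselJ1 (besselJ0 x - besselJ1 x / x) x := by
  have hderiv := hasDerivAt_intervalIntegral_of_continuous (a := 0) (b := π)
    (F := fun x θ => cos (θ - x * sin θ)) (F' := fun x θ => sin θ * sin (θ - x * sin θ))
    (fun _ => by fun_prop) (by fun_prop)
    (fun y θ => by
      simpa [mul_comm] using ((hasDerivAt_mul_const (sin θ)).const_sub θ).cos (x := y)) x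
  refine HasDerivAt.congr_deriv (f := besselJ1) (hderiv.const_mul (1 / π)) ?_
  have hexact : ∫ θ in (0:ℝ)..π, cos (θ - x * sin θ) * (1 - x * cos θ) = 0 := by
    have hd (θ : ℝ) : HasDerivAt (fun θ => sin (θ - x * sin θ))
        (cos (θ - x * sin θ) * (1 - x * cos θ)) θ :=
      ((hasDerivAt_id' θ).sub ((hasDerivAt_sin θ).const_mul x)).sin
    rw [integral_eq_sub_of_hasDerivAt (fun θ _ => hd θ)
      (by apply Continuous.intervalIntegrable; fun_prop)]
    simp
  have hsplit : ∀ θ, sin θ * sin (θ - x * sin θ) =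
      cos (x * sin θ) - (cos (θ - x * sin θ) - cos (θ - x * sin θ) * (1 - x * cos θ)) / x := by
    intro θ
    have hcos : cos (x * sin θ) = cos θ * cos (θ - x * sin θ) + sin θ * sin (θ - x * sin θ) := by
      rw [← cos_sub, sub_sub_cancel]
    rw [hcos]
    field_simp
    ring
  rw [intervalIntegral.integral_congr fun θ _ => hsplit θ,
    intervalIntegral.integral_sub (by apply Continuous.intervalIntegrable; fun_prop)
      (by apply Continuous.intervalIntegrable; fun_prop), intervalIntegral.integral_div,
    intervalIntegral.integral_sub (by apply Continuous.intervalIntegrable; fun_prop)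
      (by apply Continuous.intervalIntegrable; fun_prop), hexact, besselJ0, besselJ1]
  ring

noncomputable def ellipticIntegralRpow (p k : ℝ) : ℝ :=
  ∫ θ in (0:ℝ)..(π / 2), (1 - k ^ 2 * sin θ ^ 2) ^ p

theorem one_sub_sq_mul_sin_sq_pos {k : ℝ} (hk : |k| < 1) (θ : ℝ) : 0 < 1 - k ^ 2 * sin θ ^ 2 := by
  have hk2 : k ^ 2 < 1 := by rwa [sq_lt_one_iff_abs_lt_one]
  nlinarith [sin_sq_le_one θ, sq_nonneg k]

theorem continuous_one_sub_sq_mul_sin_sq_rpow {k : ℝ} (hk : |k| < 1) (p : ℝ) :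
    Continuous fun θ => (1 - k ^ 2 * sin θ ^ 2) ^ p :=
  (by fun_prop : Continuous fun θ => 1 - k ^ 2 * sin θ ^ 2).rpow_const
    fun θ => .inl (one_sub_sq_mul_sin_sq_pos hk θ).ne'

theorem intervalIntegrable_one_sub_sq_mul_sin_sq_rpow {k : ℝ} (hk : |k| < 1) (p a b : ℝ) :
    IntervalIntegrable (fun θ => (1 - k ^ 2 * sin θ ^ 2) ^ p) volume a b :=
  (continuous_one_sub_sq_mul_sin_sq_rpow hk p).intervalIntegrable a b

theorem hasDerivAt_ellipticIntegralRpow (p : ℝ) {k : ℝ} (hk : |k| < 1) (hk0 : k ≠ 0) :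
    HasDerivAt (ellipticIntegralRpow p)
      (2 * p * (ellipticIntegralRpow p k - ellipticIntegralRpow (p - 1) k) / k) k := by
  have hball {y : ℝ} (hy : y ∈ Metric.ball 0 1) : |y| < 1 := by simpa using hy
  have hderiv := hasDerivAt_intervalIntegral_of_continuousOn (a := 0) (b := π / 2)
    (F := fun k θ => (1 - k ^ 2 * sin θ ^ 2) ^ p)
    (F' := fun k θ => -(2 * k * sin θ ^ 2) * p * (1 - k ^ 2 * sin θ ^ 2) ^ (p - 1))
    Metric.isOpen_ball (by simpa using hk)
    (fun y hy => (continuous_one_sub_sq_mul_sin_sq_rpow (hball hy) p).continuousOn)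
    (ContinuousOn.mul (by fun_prop) <| ContinuousOn.rpow_const (by fun_prop)
      fun q hq => .inl (one_sub_sq_mul_sin_sq_pos (hball hq.1) q.2).ne')
    fun y hy θ _ => by
      refine ((((hasDerivAt_pow 2 y).mul_const (sin θ ^ 2)).const_sub 1).rpow_const
        (.inl (one_sub_sq_mul_sin_sq_pos (hball hy) θ).ne')).congr_deriv ?_
      push_cast
      ring
  refine hderiv.congr_deriv ?_
  have hpt (θ : ℝ) : -(2 * k * sin θ ^ 2) * p * (1 - k ^ 2 * sin θ ^ 2) ^ (p - 1) =
      2 * p * ((1 - k ^ 2 * sin θ ^ 2) ^ p - (1 - k ^ 2 * sin θ ^ 2) ^ (p - 1)) / k := by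
    have hu := (one_sub_sq_mul_sin_sq_pos hk θ).ne'
    rw [rpow_sub_one hu p]
    field_simp
    ring
  rw [intervalIntegral.integral_congr fun θ _ => hpt θ, intervalIntegral.integral_div,
    intervalIntegral.integral_const_mul, intervalIntegral.integral_sub
      (intervalIntegrable_one_sub_sq_mul_sin_sq_rpow hk _ _ _)
      (intervalIntegrable_one_sub_sq_mul_sin_sq_rpow hk _ _ _)]
  rfl

theorem one_sub_sq_mul_ellipticIntegralRpow_neg_three_halves {k : ℝ} (hk : |k| < 1) :
    (1 - k ^ 2) * ellipticIntegralRpow (-(3:ℝ) / 2) k = ellipticE k := by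
  set u : ℝ → ℝ := fun θ => 1 - k ^ 2 * sin θ ^ 2
  have hu (θ : ℝ) : 0 < u θ := one_sub_sq_mul_sin_sq_pos hk θ
  have hd (θ : ℝ) : HasDerivAt (fun θ => k ^ 2 * (sin θ * cos θ) * u θ ^ (-(1:ℝ) / 2))
      (u θ ^ ((1:ℝ) / 2) - (1 - k ^ 2) * u θ ^ (-(3:ℝ) / 2)) θ := by
    have hu' : HasDerivAt u (-(k ^ 2 * (2 * sin θ * cos θ))) θ := by
      refine ((((hasDerivAt_sin θ).pow 2).const_mul (k ^ 2)).const_sub 1).congr_deriv ?_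
      push_cast
      ring
    refine ((((hasDerivAt_sin θ).mul (hasDerivAt_cos θ)).const_mul (k ^ 2)).mul
      (hu'.rpow_const (.inl (hu θ).ne'))).congr_deriv ?_
    have h₁ : u θ ^ (-(1:ℝ) / 2) = u θ ^ (-(3:ℝ) / 2) * u θ := by
      rw [← rpow_add_one (hu θ).ne']; norm_num
    have h₂ : u θ ^ ((1:ℝ) / 2) = u θ ^ (-(3:ℝ) / 2) * u θ * u θ := by
      rw [← rpow_add_one (hu θ).ne', ← rpow_add_one (hu θ).ne']; norm_num
    rw [h₁, h₂, show -(1:ℝ) / 2 - 1 = -(3:ℝ) / 2 by norm_num]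
    simp only [u, Pi.mul_apply]
    linear_combination (k ^ 2 * (1 - k ^ 2 * sin θ ^ 2) ^ (-(3:ℝ) / 2)) * cos_sq_add_sin_sq θ
  have hint (p : ℝ) : IntervalIntegrable (fun θ => u θ ^ p) volume 0 (π / 2) :=
    intervalIntegrable_one_sub_sq_mul_sin_sq_rpow hk p 0 (π / 2)
  have hzero :
      ∫ θ in (0:ℝ)..(π / 2), (u θ ^ ((1:ℝ) / 2) - (1 - k ^ 2) * u θ ^ (-(3:ℝ) / 2)) = 0 := by
    rw [integral_eq_sub_of_hasDerivAt (fun θ _ => hd θ) ((hint _).sub ((hint _).const_mul _))]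
    simp
  rw [intervalIntegral.integral_sub (hint _) ((hint _).const_mul _),
    intervalIntegral.integral_const_mul, sub_eq_zero] at hzero
  exact hzero.symm

theorem ellipticK_eq_ellipticIntegralRpow : ellipticK = ellipticIntegralRpow (-(1:ℝ) / 2) := rfl

theorem ellipticE_eq_ellipticIntegralRpow : ellipticE = ellipticIntegralRpow ((1:ℝ) / 2) := rfl

theorem hasDerivAt_ellipticE {k : ℝ} (hk : |k| < 1) (hk0 : k ≠ 0) :
    HasDerivAt ellipticE ((ellipticE k - ellipticK k) / k) k := by
  have h := hasDerivAt_ellipticIntegralRpow ((1:ℝ) / 2) hk hk0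
  rw [show (1:ℝ) / 2 - 1 = -(1:ℝ) / 2 by norm_num, ← ellipticE_eq_ellipticIntegralRpow,
    ← ellipticK_eq_ellipticIntegralRpow] at h
  exact h.congr_deriv (by ring)

theorem hasDerivAt_ellipticK {k : ℝ} (hk : |k| < 1) (hk0 : k ≠ 0) :
    HasDerivAt ellipticK ((ellipticE k / (1 - k ^ 2) - ellipticK k) / k) k := by
  have h := hasDerivAt_ellipticIntegralRpow (-(1:ℝ) / 2) hk hk0
  have hk2 : 1 - k ^ 2 ≠ 0 := by
    rw [sub_ne_zero, ne_comm]; exact (sq_lt_one_iff_abs_lt_one k).2 hk |>.ne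
  rw [show -(1:ℝ) / 2 - 1 = -(3:ℝ) / 2 by norm_num, ← ellipticK_eq_ellipticIntegralRpow] at h
  rw [← one_sub_sq_mul_ellipticIntegralRpow_neg_three_halves hk, mul_div_cancel_left₀ _ hk2]
  exact h.congr_deriv (by ring)

/-- `∫ (x³/(1−x²))·J₀(x)·E(x) dx = J₀(x)·(K(x) − E(x)) − x·J₁(x)·E(x)`
for `0 < x < 1`. -/
theorem stmt_19 :
    ∀ x : ℝ, 0 < x → x < 1 →
      HasDerivAt
        (fun t => besselJ0 t * (ellipticK t - ellipticE t) - t * besselJ1 t * ellipticE t)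
        (x ^ 3 / (1 - x ^ 2) * besselJ0 x * ellipticE x) x := by
  intro x hx hx1
  have habs : |x| < 1 := by rwa [abs_of_pos hx]
  have hx0 : x ≠ 0 := hx.ne'
  have hx2 : 1 - x ^ 2 ≠ 0 := by nlinarith
  have hE := hasDerivAt_ellipticE habs hx0
  refine ((hasDerivAt_besselJ0 x).mul ((hasDerivAt_ellipticK habs hx0).sub hE) |>.sub
    (((hasDerivAt_id x).mul (hasDerivAt_besselJ1 hx0)).mul hE)).congr_deriv ?_
  simp only [Pi.mul_apply, Pi.sub_apply, id]
  field_simp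
  ring
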